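/- Let F_1, …, F_D be N×N complex Hermitian matrices. Then the minimum over x ∈ [0,1]^D of λ_max(I + ∑_{p=1}^D x_p F_p) equals the supremum over all N×N density matrices Z of the quantity 1 + ∑_{p=1}^D min(Tr(Z F_p), 0). (Both sides are attained; in particular Tr(Z F_p) is real since Z and F_p are Hermitian.) -/

import Mathlib

open Matrix
open scoped ComplexOrder

noncomputable def lamMax {N : ℕ} {M : Matrix (Fin N) (Fin N) ℂ}
    (hM : M.IsHermitian) : ℝ :=
  ⨆ i, hM.eigenvalues i

/-!
Sion's minimax theorem applies to `payoff F x Z = Re Tr(Z (1 + ∑ₚ xₚ Fₚ))`, which is affine in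
`x` on the box `[0,1]^D` and ℝ-linear in `Z` on the compact convex set of density matrices, and
yields a saddle point `(a, b)`. For fixed `x` the maximum over density matrices is `λ_max`: it is
attained at the projection onto a top eigenvector, and `λ_max • 1 - M ≥ 0` bounds the rest. For
fixed `Z` the minimum over the box is `1 + ∑ₚ min (Tr(Z Fₚ)) 0`, attained by `xₚ = 1` exactly
where `Tr(Z Fₚ) < 0`. At a saddle point both extremal values equal `payoff F a b`.
-/

open scoped MatrixOrder

section Spectral

variable {𝕜 n : Type*} [RCLike 𝕜] [Fintype n] [DecidableEq n]

lemma Matrix.IsHermitian.le_algebraMap_of_eigenvalues_le {M : Matrix n n 𝕜} (hM : M.IsHermitian)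
    {r : ℝ} (h : ∀ i, hM.eigenvalues i ≤ r) : M ≤ algebraMap ℝ _ r := by
  rw [le_algebraMap_iff_spectrum_le hM.isSelfAdjoint]
  rintro x hx
  obtain ⟨i, rfl⟩ := hM.spectrum_real_eq_range_eigenvalues ▸ hx
  exact h i

lemma Matrix.trace_mul_nonneg {A B : Matrix n n 𝕜} (hA : 0 ≤ A) (hB : 0 ≤ B) :
    0 ≤ (A * B).trace := by
  have hsqrt : IsSelfAdjoint (CFC.sqrt A) := (CFC.sqrt_nonneg A).isSelfAdjoint
  have hconj : 0 ≤ star (CFC.sqrt A) * B * CFC.sqrt A := star_left_conjugate_nonneg hB _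
  rw [hsqrt.star_eq] at hconj
  rw [← CFC.sqrt_mul_sqrt_self A hA, mul_assoc, trace_mul_comm, mul_assoc]
  simpa [mul_assoc] using (nonneg_iff_posSemidef.mp hconj).trace_nonneg

end Spectral

section DensityMatrices

variable {n : Type*} [Fintype n]

def densityMatrices (n : Type*) [Fintype n] : Set (Matrix n n ℂ) :=
  {Z | Z.PosSemidef ∧ Z.trace = 1}

lemma convex_densityMatrices : Convex ℝ (densityMatrices n) := by
  intro Y hY Z hZ a b ha hb hab
  refine ⟨(hY.1.smul ha).add (hZ.1.smul hb), ?_⟩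
  rw [trace_add, trace_smul, trace_smul, hY.2, hZ.2, ← add_smul, hab, one_smul]

variable [DecidableEq n]

lemma re_trace_mul_le_of_eigenvalues_le {Z M : Matrix n n ℂ} (hZ : Z ∈ densityMatrices n)
    (hM : M.IsHermitian) {r : ℝ} (h : ∀ i, hM.eigenvalues i ≤ r) : (Z * M).trace.re ≤ r := by
  have hgap : 0 ≤ (Z * (algebraMap ℝ _ r - M)).trace :=
    trace_mul_nonneg (nonneg_iff_posSemidef.mpr hZ.1)
      (sub_nonneg.mpr (hM.le_algebraMap_of_eigenvalues_le h))
  rw [mul_sub, trace_sub, Algebra.algebraMap_eq_smul_one, mul_smul_comm, mul_one, trace_smul,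
    hZ.2] at hgap
  simpa using (Complex.nonneg_iff.mp hgap).1

lemma exists_mem_densityMatrices_trace_mul_eq_eigenvalues {M : Matrix n n ℂ}
    (hM : M.IsHermitian) (i : n) :
    ∃ Z ∈ densityMatrices n, (Z * M).trace = hM.eigenvalues i := by
  set v : n → ℂ := ⇑(hM.eigenvectorBasis i)
  have hv : v ⬝ᵥ star v = 1 := hM.eigenvectorBasis.inner_eq_one i
  refine ⟨vecMulVec v (star v), ⟨posSemidef_vecMulVec_self_star v, by simpa using hv⟩, ?_⟩
  rw [trace_mul_comm, mul_vecMulVec, hM.mulVec_eigenvectorBasis, trace_vecMulVec,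
    smul_dotProduct, hv]
  simp

lemma densityMatrices_nonempty [Nonempty n] : (densityMatrices n).Nonempty := by
  obtain ⟨Z, hZ, -⟩ :=
    exists_mem_densityMatrices_trace_mul_eq_eigenvalues isHermitian_zero (Classical.arbitrary n)
  exact ⟨Z, hZ⟩

lemma eigenvalues_le_one_of_mem_densityMatrices {Z : Matrix n n ℂ} (hZ : Z ∈ densityMatrices n)
    (i : n) : hZ.1.1.eigenvalues i ≤ 1 := by
  have htr := congrArg Complex.re (hZ.1.1.trace_eq_sum_eigenvalues.symm.trans hZ.2)
  simp only [Complex.re_sum, Complex.one_re] at htr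
  rw [← htr]
  exact Finset.single_le_sum (fun j _ => hZ.1.eigenvalues_nonneg j) (Finset.mem_univ i)

-- The L2 operator norm induces the product topology, so C⋆-algebra facts about it apply here.
lemma isClosed_densityMatrices : IsClosed (densityMatrices n) := by
  have hnonneg : IsClosed {Z : Matrix n n ℂ | 0 ≤ Z} := by
    open scoped Matrix.Norms.L2Operator in exact CStarAlgebra.isClosed_nonneg
  have hdens : densityMatrices n = {Z | 0 ≤ Z} ∩ {Z | Z.trace = 1} := by
    ext Z
    simp [densityMatrices, nonneg_iff_posSemidef]
  rw [hdens]
  exact hnonneg.inter (isClosed_eq continuous_id.matrix_trace continuous_const)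

lemma isCompact_densityMatrices : IsCompact (densityMatrices n) := by
  open scoped Matrix.Norms.L2Operator in
  refine (ProperSpace.isCompact_closedBall (0 : Matrix n n ℂ) 1).of_isClosed_subset
    isClosed_densityMatrices fun Z hZ => ?_
  rw [mem_closedBall_zero_iff, CStarAlgebra.norm_le_iff_le_algebraMap Z zero_le_one
    (nonneg_iff_posSemidef.mpr hZ.1)]
  exact hZ.1.1.le_algebraMap_of_eigenvalues_le (eigenvalues_le_one_of_mem_densityMatrices hZ)

end DensityMatrices

lemma isGreatest_lamMax {N : ℕ} [NeZero N] {M : Matrix (Fin N) (Fin N) ℂ} (hM : M.IsHermitian) :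
    IsGreatest ((fun Z => (Z * M).trace.re) '' densityMatrices (Fin N)) (lamMax hM) := by
  have hle : ∀ i, hM.eigenvalues i ≤ lamMax hM := le_ciSup (Set.finite_range _).bddAbove
  obtain ⟨i, hi⟩ := exists_eq_ciSup_of_finite (f := hM.eigenvalues)
  obtain ⟨Z, hZ, hZM⟩ := exists_mem_densityMatrices_trace_mul_eq_eigenvalues hM i
  refine ⟨⟨Z, hZ, ?_⟩, ?_⟩
  · simp [hZM, lamMax, hi]
  · rintro _ ⟨Z, hZ, rfl⟩
    exact re_trace_mul_le_of_eigenvalues_le hZ hM hle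

lemma isLeast_sum_mul_Icc {ι : Type*} [Fintype ι] (c : ι → ℝ) :
    IsLeast ((fun x => ∑ i, x i * c i) '' Set.Icc (0 : ι → ℝ) 1) (∑ i, min (c i) 0) := by
  classical
  refine ⟨⟨fun i => if c i < 0 then 1 else 0, ⟨fun i => ?_, fun i => ?_⟩, ?_⟩, ?_⟩
  · dsimp only; split_ifs <;> norm_num
  · dsimp only; split_ifs <;> norm_num
  · refine Finset.sum_congr rfl fun i _ => ?_
    dsimp only
    split_ifs with hc
    · rw [one_mul, min_eq_left hc.le]
    · rw [zero_mul, min_eq_right (not_lt.mp hc)]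
  · rintro _ ⟨x, ⟨hx0, hx1⟩, rfl⟩
    refine Finset.sum_le_sum fun i _ => ?_
    rcases le_total 0 (c i) with hc | hc
    · exact (min_le_right _ _).trans (mul_nonneg (hx0 i) hc)
    · simpa [min_eq_left hc] using mul_le_mul_of_nonpos_right (hx1 i) hc

lemma IsSaddlePointOn.isLeast_image_and_isGreatest_image {E F β : Type*} [PartialOrder β]
    {X : Set E} {Y : Set F} {f : E → F → β} {a : E} {b : F} (hab : IsSaddlePointOn X Y f a b)
    (ha : a ∈ X) (hb : b ∈ Y) {φ : E → β} {ψ : F → β}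
    (hφ : ∀ x ∈ X, IsGreatest (f x '' Y) (φ x)) (hψ : ∀ y ∈ Y, IsLeast ((f · y) '' X) (ψ y)) :
    IsLeast (φ '' X) (f a b) ∧ IsGreatest (ψ '' Y) (f a b) := by
  have hφa : φ a = f a b :=
    (hφ a ha).unique ⟨⟨b, hb, rfl⟩, by rintro _ ⟨y, hy, rfl⟩; exact hab a ha y hy⟩
  have hψb : ψ b = f a b :=
    (hψ b hb).unique ⟨⟨a, ha, rfl⟩, by rintro _ ⟨x, hx, rfl⟩; exact hab x hx b hb⟩
  refine ⟨⟨⟨a, ha, hφa⟩, ?_⟩, ⟨⟨b, hb, hψb⟩, ?_⟩⟩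
  · rintro _ ⟨x, hx, rfl⟩
    exact (hab x hx b hb).trans ((hφ x hx).2 ⟨b, hb, rfl⟩)
  · rintro _ ⟨y, hy, rfl⟩
    exact ((hψ y hy).2 ⟨a, ha, rfl⟩).trans (hab a ha y hy)

lemma isHermitian_one_add_sum {ι n : Type*} [Fintype ι] [DecidableEq n] {F : ι → Matrix n n ℂ}
    (hF : ∀ i, (F i).IsHermitian) (x : ι → ℝ) : (1 + ∑ i, (x i : ℂ) • F i).IsHermitian :=
  isHermitian_one.add <| isSelfAdjoint_sum _ fun i _ => (hF i).smul (Complex.conj_ofReal (x i))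

section Payoff

variable {ι n : Type*} [Fintype ι] [Fintype n] [DecidableEq n]

def payoff (F : ι → Matrix n n ℂ) (x : ι → ℝ) (Z : Matrix n n ℂ) : ℝ :=
  (Z * (1 + ∑ i, (x i : ℂ) • F i)).trace.re

lemma payoff_eq (F : ι → Matrix n n ℂ) (x : ι → ℝ) (Z : Matrix n n ℂ) :
    payoff F x Z = Z.trace.re + ∑ i, x i * (Z * F i).trace.re := by
  simp [payoff, mul_add, Matrix.mul_sum, trace_sum]

lemma continuous_payoff_left (F : ι → Matrix n n ℂ) (Z : Matrix n n ℂ) :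
    Continuous (payoff F · Z) := by
  unfold payoff
  fun_prop

lemma continuous_payoff_right (F : ι → Matrix n n ℂ) (x : ι → ℝ) : Continuous (payoff F x) := by
  unfold payoff
  fun_prop

lemma convexOn_payoff_left (F : ι → Matrix n n ℂ) (Z : Matrix n n ℂ) {s : Set (ι → ℝ)}
    (hs : Convex ℝ s) : ConvexOn ℝ s (payoff F · Z) := by
  have hpayoff : (payoff F · Z) =
      fun x => Fintype.linearCombination ℝ (fun i => (Z * F i).trace.re) x + Z.trace.re := by
    ext x
    simp [payoff_eq, Fintype.linearCombination_apply, add_comm]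
  rw [hpayoff]
  exact (LinearMap.convexOn _ hs).add_const _

lemma concaveOn_payoff_right (F : ι → Matrix n n ℂ) (x : ι → ℝ) {s : Set (Matrix n n ℂ)}
    (hs : Convex ℝ s) : ConcaveOn ℝ s (payoff F x) :=
  (Complex.reLm ∘ₗ traceLinearMap n ℝ ℂ ∘ₗ LinearMap.mulRight ℝ _).concaveOn hs

lemma exists_isSaddlePointOn_payoff [Nonempty n] (F : ι → Matrix n n ℂ) :
    ∃ a ∈ Set.Icc (0 : ι → ℝ) 1, ∃ b ∈ densityMatrices n,
      IsSaddlePointOn (Set.Icc 0 1) (densityMatrices n) (payoff F) a b :=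
  Sion.exists_isSaddlePointOn (Set.nonempty_Icc.2 zero_le_one) (convex_Icc 0 1) isCompact_Icc
    (fun Z _ => (continuous_payoff_left F Z).lowerSemicontinuous.lowerSemicontinuousOn _)
    (fun Z _ => (convexOn_payoff_left F Z (convex_Icc 0 1)).quasiconvexOn)
    convex_densityMatrices densityMatrices_nonempty isCompact_densityMatrices
    (fun x _ => (continuous_payoff_right F x).upperSemicontinuous.upperSemicontinuousOn _)
    (fun x _ => (concaveOn_payoff_right F x convex_densityMatrices).quasiconcaveOn)

lemma isLeast_payoff_Icc (F : ι → Matrix n n ℂ) {Z : Matrix n n ℂ} (hZ : Z ∈ densityMatrices n) :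
    IsLeast ((payoff F · Z) '' Set.Icc 0 1) (1 + ∑ i, min (Z * F i).trace.re 0) := by
  have h := (monotone_id.const_add (1 : ℝ)).map_isLeast
    (isLeast_sum_mul_Icc fun i => (Z * F i).trace.re)
  rw [Set.image_image] at h
  simpa [payoff_eq, hZ.2] using h

end Payoff

/-- min_{x ∈ [0,1]^D} λ_max(I + ∑_p x_p F_p)
= max over density matrices Z of (1 + ∑_p min(Tr(Z F_p), 0)), both attained. -/
theorem minimax_duality_nonneg_box (D N : ℕ) (hN : 0 < N)
    (F : Fin D → Matrix (Fin N) (Fin N) ℂ) (hF : ∀ p, (F p).IsHermitian) :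
    ∃ v : ℝ,
      IsLeast {w : ℝ | ∃ x : Fin D → ℝ, (∀ p, x p ∈ Set.Icc (0 : ℝ) 1) ∧
          ∃ h : ((1 : Matrix (Fin N) (Fin N) ℂ) + ∑ p, (x p : ℂ) • F p).IsHermitian,
            lamMax h = w} v ∧
      IsGreatest {w : ℝ | ∃ Z : Matrix (Fin N) (Fin N) ℂ,
          Z.IsHermitian ∧ Z.PosSemidef ∧ Z.trace = 1 ∧
          w = 1 + ∑ p, min ((Z * F p).trace.re) 0} v := by
  have : NeZero N := ⟨hN.ne'⟩
  obtain ⟨a, ha, b, hb, hab⟩ := exists_isSaddlePointOn_payoff F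
  obtain ⟨hprimal, hdual⟩ := hab.isLeast_image_and_isGreatest_image ha hb
    (fun x _ => isGreatest_lamMax (isHermitian_one_add_sum hF x))
    (fun Z hZ => isLeast_payoff_Icc F hZ)
  refine ⟨payoff F a b, (congrArg (IsLeast · _) (Set.ext fun w => ?_)).mpr hprimal,
    (congrArg (IsGreatest · _) (Set.ext fun w => ?_)).mpr hdual⟩
  · constructor
    · rintro ⟨x, hx, h, rfl⟩
      exact ⟨x, ⟨fun p => (hx p).1, fun p => (hx p).2⟩, rfl⟩
    · rintro ⟨x, hx, rfl⟩
      exact ⟨x, fun p => ⟨hx.1 p, hx.2 p⟩, _, rfl⟩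
  · constructor
    · rintro ⟨Z, -, hZ, htr, rfl⟩
      exact ⟨Z, ⟨hZ, htr⟩, rfl⟩
    · rintro ⟨Z, ⟨hZ, htr⟩, rfl⟩
      exact ⟨Z, hZ.1, hZ, htr, rfl⟩
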